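/- Let C_ε^δ be the pairwise-overlap (ε,δ)-capacity (maximum log-cardinality of a codebook where every pair of codewords has relative equivocation e_ε(x₁,x₂) ≤ δ/|𝒳|), and let C̃_ε^δ be the average-overlap (ε,δ)-capacity of Lim–Franceschetti (maximum log-cardinality of a codebook whose average overlap Δ = (1/|𝒳|) Σ_x e_ε(x)/(2 m_𝒴(V_ε)) is at most δ). Then C_ε^δ ≤ C̃_ε^{δ/(2 m_𝒴(V_ε))} and C̃_ε^δ ≤ C_ε^{δ · m_𝒴(V_ε) · 2^{2 C̃_ε^δ + 1}}. -/
import Mathlib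


open Set Real

namespace NSIT

variable {Ω 𝒳 𝒴 : Type*}

/-- The conditional range `⟦X|y⟧` of an uncertain variable `X` given that the
uncertain variable `Y` takes the value `y`. -/
def condRange (X : Ω → 𝒳) (Y : Ω → 𝒴) (y : 𝒴) : Set 𝒳 :=
  X '' {ω | Y ω = y}

/-- `m` is an uncertainty function: it vanishes on the empty set, is positive (and
finite, being real-valued) on nonempty sets, and is strongly transitive. -/
def IsUncertaintyFn (m : Set 𝒳 → ℝ) : Prop :=
  m ∅ = 0 ∧ (∀ S : Set 𝒳, S.Nonempty → 0 < m S) ∧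
    ∀ S₁ S₂ : Set 𝒳, max (m S₁) (m S₂) ≤ m (S₁ ∪ S₂)

/-- The set of association `𝒜(X;Y)`: all nonzero relative uncertainties of
intersections of two distinct conditional ranges of `X` given values of `Y`. -/
def assocSet (mX : Set 𝒳 → ℝ) (X : Ω → 𝒳) (Y : Ω → 𝒴) : Set ℝ :=
  {r | r ≠ 0 ∧ ∃ y₁ ∈ Set.range Y, ∃ y₂ ∈ Set.range Y, y₁ ≠ y₂ ∧
    r = mX (condRange X Y y₁ ∩ condRange X Y y₂) / mX (Set.range X)}

/-- `X` and `Y` are associated at levels `(δ₁, δ₂)`: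
`𝒜(X;Y) ⪯ δ₁` and `𝒜(Y;X) ⪯ δ₂` (vacuously true for empty association sets). -/
def Associated (mX : Set 𝒳 → ℝ) (mY : Set 𝒴 → ℝ) (X : Ω → 𝒳) (Y : Ω → 𝒴)
    (δ₁ δ₂ : ℝ) : Prop :=
  (∀ r ∈ assocSet mX X Y, r ≤ δ₁) ∧ ∀ r ∈ assocSet mY Y X, r ≤ δ₂

/-- `X` and `Y` are disassociated at levels `(δ₁, δ₂)`:
`𝒜(X;Y) ≻ δ₁` and `𝒜(Y;X) ≻ δ₂` (which in particular requires the association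
sets to be nonempty). -/
def Disassociated (mX : Set 𝒳 → ℝ) (mY : Set 𝒴 → ℝ) (X : Ω → 𝒳) (Y : Ω → 𝒴)
    (δ₁ δ₂ : ℝ) : Prop :=
  (assocSet mX X Y).Nonempty ∧ (∀ r ∈ assocSet mX X Y, δ₁ < r) ∧
    (assocSet mY Y X).Nonempty ∧ ∀ r ∈ assocSet mY Y X, δ₂ < r

/-- `x₁` and `x₂` are `δ`-connected via `⟦X|Y⟧`: there is a finite chain of
conditional ranges joining them whose consecutive intersections have relative
uncertainty greater than `δ`. -/
def Conn (mX : Set 𝒳 → ℝ) (X : Ω → 𝒳) (Y : Ω → 𝒴) (δ : ℝ) (x₁ x₂ : 𝒳) : Prop :=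
  ∃ (N : ℕ) (ys : Fin (N + 1) → 𝒴),
    x₁ ∈ condRange X Y (ys 0) ∧ x₂ ∈ condRange X Y (ys (Fin.last N)) ∧
    ∀ i : Fin N,
      δ < mX (condRange X Y (ys i.succ) ∩ condRange X Y (ys i.castSucc)) /
        mX (Set.range X)

/-- `F` is a `δ`-overlap family (for `X` given `Y`): it covers `⟦X⟧`, each member
is `δ`-connected and contains a singly `δ`-connected set of the form `⟦X|y⟧`,
any two distinct members overlap with uncertainty at most `δ · m(⟦X⟧)`, and every
conditional range `⟦X|y⟧` is contained in some member. -/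
def IsOverlapFamily (mX : Set 𝒳 → ℝ) (X : Ω → 𝒳) (Y : Ω → 𝒴) (δ : ℝ)
    (F : Set (Set 𝒳)) : Prop :=
  ⋃₀ F = Set.range X ∧
  (∀ S ∈ F, (∀ x₁ ∈ S, ∀ x₂ ∈ S, Conn mX X Y δ x₁ x₂) ∧
    ∃ y ∈ Set.range Y, condRange X Y y ⊆ S) ∧
  (∀ S₁ ∈ F, ∀ S₂ ∈ F, S₁ ≠ S₂ → mX (S₁ ∩ S₂) ≤ δ * mX (Set.range X)) ∧
  ∀ y ∈ Set.range Y, ∃ S ∈ F, condRange X Y y ⊆ S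

variable {E : Type*} [NormedAddCommGroup E] [DecidableEq E]

/-- The minimal uncertainty `m_𝒴(V_ε)` of a noise ball of radius `ε`. -/
noncomputable def minBallUncertainty (mY : Set E → ℝ) (ε : ℝ) : ℝ :=
  sInf {r | ∃ x : E, r = mY (Metric.closedBall x ε)}

/-- Pairwise `(ε,δ)`-distinguishability of a codebook. -/
def IsDistinguishable (mY : Set E → ℝ) (ε δ : ℝ) (C : Finset E) : Prop :=
  ∀ x₁ ∈ C, ∀ x₂ ∈ C, x₁ ≠ x₂ →
    mY (Metric.closedBall x₁ ε ∩ Metric.closedBall x₂ ε) / mY Set.univ ≤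
      δ / (C.card : ℝ)

/-- The pairwise-overlap `(ε,δ)`-capacity `C_ε^δ`. -/
noncomputable def pairCapacity (mY : Set E → ℝ) (ε δ : ℝ) : ℝ :=
  sSup {r | ∃ C : Finset E, IsDistinguishable mY ε δ C ∧
    r = Real.logb 2 (C.card : ℝ)}

/-- The average-overlap `(ε,δ)`-capacity `C̃_ε^δ` of Lim and Franceschetti. -/
noncomputable def avgCapacity (mY : Set E → ℝ) (ε δ : ℝ) : ℝ :=
  sSup {r | ∃ C : Finset E,
    (1 / (2 * (C.card : ℝ) * minBallUncertainty mY ε)) *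
        ∑ x₁ ∈ C, ∑ x₂ ∈ C.erase x₁,
          mY (Metric.closedBall x₁ ε ∩ Metric.closedBall x₂ ε) ≤ δ ∧
    r = Real.logb 2 (C.card : ℝ)}

open Finset in
private lemma exists_indep_aux {α : Type*} [DecidableEq α] (R : α → α → Prop) [DecidableRel R]
    (hsymm : ∀ x y, R x y → R y x) (d : ℕ) :
    ∀ C : Finset α, (∀ x ∈ C, ((C.erase x).filter (R x)).card ≤ d) →
    ∃ C' ⊆ C, C.card ≤ (d + 1) * C'.card ∧ ∀ x ∈ C', ∀ y ∈ C', x ≠ y → ¬ R x y := by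
  intro C
  induction C using Finset.strongInduction with
  | _ C ih =>
    intro hdeg
    rcases C.eq_empty_or_nonempty with rfl | ⟨x, hx⟩
    · exact ⟨∅, le_refl _, by simp, by simp⟩
    · set T : Finset α := insert x ((C.erase x).filter (R x)) with hT
      have hTC : T ⊆ C := by
        intro y hy
        rcases Finset.mem_insert.1 hy with rfl | hy
        · exact hx
        · exact Finset.mem_of_mem_erase (Finset.mem_of_mem_filter _ hy)
      have hxT : x ∈ T := Finset.mem_insert_self _ _
      have hsub : C \ T ⊂ C := by
        refine Finset.ssubset_iff_of_subset (Finset.sdiff_subset) |>.2 ⟨x, hx, by simp [hxT]⟩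
      obtain ⟨C'', hsub'', hcard'', hind''⟩ := ih (C \ T) hsub (by
        intro y hy
        refine le_trans (Finset.card_le_card ?_) (hdeg y (Finset.mem_sdiff.1 hy).1)
        exact Finset.filter_subset_filter _ (Finset.erase_subset_erase _ Finset.sdiff_subset))
      have hxC'' : x ∉ C'' := fun h => (Finset.mem_sdiff.1 (hsub'' h)).2 hxT
      refine ⟨insert x C'', ?_, ?_, ?_⟩
      · intro y hy
        rcases Finset.mem_insert.1 hy with rfl | hy
        · exact hx
        · exact (Finset.mem_sdiff.1 (hsub'' hy)).1
      · have hcardT : T.card ≤ d + 1 := by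
          refine le_trans (Finset.card_insert_le _ _) ?_
          exact Nat.add_le_add_right (hdeg x hx) 1
        have h1 : C.card ≤ (C \ T).card + T.card := by
          have h2 := Finset.card_sdiff_of_subset hTC
          have h3 := Finset.card_le_card hTC
          omega
        rw [Finset.card_insert_of_notMem hxC'']
        calc C.card ≤ (C \ T).card + T.card := h1
          _ ≤ (d + 1) * C''.card + (d + 1) := by omega
          _ = (d + 1) * (C''.card + 1) := by ring
      · intro a ha b hb hab
        rcases Finset.mem_insert.1 ha with rfl | ha'
        · rcases Finset.mem_insert.1 hb with rfl | hb'
          · exact absurd rfl hab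
          · have hbD := Finset.mem_sdiff.1 (hsub'' hb')
            intro hR
            exact hbD.2 (Finset.mem_insert_of_mem (Finset.mem_filter.2
              ⟨Finset.mem_erase.2 ⟨fun h => hab h.symm, hbD.1⟩, hR⟩))
        · rcases Finset.mem_insert.1 hb with rfl | hb'
          · have haD := Finset.mem_sdiff.1 (hsub'' ha')
            intro hR
            exact haD.2 (Finset.mem_insert_of_mem (Finset.mem_filter.2
              ⟨Finset.mem_erase.2 ⟨hab, haD.1⟩, hsymm _ _ hR⟩))
          · exact hind'' a ha' b hb' hab

private lemma extract_aux {α : Type*} [DecidableEq α] (C : Finset α) (w : α → α → ℝ)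
    (hw : ∀ x y, 0 ≤ w x y) (hws : ∀ x y, w x y = w y x) (t : ℝ) (ht : 0 < t) (N : ℕ)
    (hT : ∑ x ∈ C, ∑ y ∈ C.erase x, w x y ≤ t * N * C.card)
    (hM : 2 * N * (2 * N + 1) ≤ C.card) :
    ∃ C' ⊆ C, C'.card = N ∧ ∀ x ∈ C', ∀ y ∈ C', x ≠ y → w x y ≤ t := by
  classical
  set deg : α → ℕ := fun x => ((C.erase x).filter (fun y => t < w x y)).card with hdegdef
  have hdegsum : ∀ x ∈ C, (deg x : ℝ) * t ≤ ∑ y ∈ C.erase x, w x y := by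
    intro x _
    have h1 : (deg x) • t ≤ ∑ y ∈ (C.erase x).filter (fun y => t < w x y), w x y :=
      Finset.card_nsmul_le_sum _ _ _ (fun y hy => le_of_lt (Finset.mem_filter.1 hy).2)
    have h2 : ∑ y ∈ (C.erase x).filter (fun y => t < w x y), w x y ≤ ∑ y ∈ C.erase x, w x y :=
      Finset.sum_le_sum_of_subset_of_nonneg (Finset.filter_subset _ _) (fun y _ _ => hw x y)
    calc (deg x : ℝ) * t = (deg x) • t := by simp [nsmul_eq_mul]
      _ ≤ _ := h1
      _ ≤ _ := h2
  have hsumdegN : ∑ x ∈ C, deg x ≤ N * C.card := by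
    have h1 : (∑ x ∈ C, (deg x : ℝ)) * t ≤ ((N : ℝ) * C.card) * t := by
      rw [Finset.sum_mul]
      refine le_trans (Finset.sum_le_sum hdegsum) (le_trans hT (le_of_eq (by ring)))
    have h2 : (∑ x ∈ C, (deg x : ℝ)) ≤ (N : ℝ) * C.card := le_of_mul_le_mul_right h1 ht
    exact_mod_cast h2
  set H : Finset α := C.filter (fun x => 2 * N + 1 ≤ deg x) with hHdef
  have hHcard : H.card * (2 * N + 1) ≤ N * C.card := by
    calc H.card * (2 * N + 1) = H.card • (2 * N + 1) := by simp [smul_eq_mul]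
      _ ≤ ∑ x ∈ H, deg x := Finset.card_nsmul_le_sum _ _ _
          (fun x hx => (Finset.mem_filter.1 hx).2)
      _ ≤ ∑ x ∈ C, deg x := Finset.sum_le_sum_of_subset (Finset.filter_subset _ _)
      _ ≤ N * C.card := hsumdegN
  set C₀ : Finset α := C \ H with hC₀def
  have hC₀deg : ∀ x ∈ C₀, ((C₀.erase x).filter (fun y => t < w x y)).card ≤ 2 * N := by
    intro x hx
    have hxH : x ∉ H := (Finset.mem_sdiff.1 hx).2
    have h1 : deg x < 2 * N + 1 := by
      by_contra h
      exact hxH (Finset.mem_filter.2 ⟨(Finset.mem_sdiff.1 hx).1, by omega⟩)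
    refine le_trans (le_trans (Finset.card_le_card ?_) (Nat.lt_succ_iff.1 h1)) (le_refl _)
    exact Finset.filter_subset_filter _ (Finset.erase_subset_erase _ Finset.sdiff_subset)
  obtain ⟨C', hsub', hcard', hind'⟩ := exists_indep_aux (fun x y => t < w x y)
    (fun x y h => by simpa [hws y x] using h) (2 * N) C₀ hC₀deg
  have hC₀card : N * (2 * N + 1) ≤ C₀.card := by
    have h1 : C₀.card = C.card - H.card := Finset.card_sdiff_of_subset (Finset.filter_subset _ _)
    have h2 : H.card + N * (2 * N + 1) ≤ C.card := by nlinarith [hHcard, hM]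
    omega
  have hN : N ≤ C'.card := by
    have h1 : (2 * N + 1) * N ≤ (2 * N + 1) * C'.card := by
      calc (2 * N + 1) * N = N * (2 * N + 1) := by ring
        _ ≤ C₀.card := hC₀card
        _ ≤ (2 * N + 1) * C'.card := hcard'
    exact Nat.le_of_mul_le_mul_left h1 (by omega)
  obtain ⟨C'', hsub'', hcard''⟩ := Finset.exists_subset_card_eq hN
  refine ⟨C'', ?_, hcard'', ?_⟩
  · exact le_trans (le_trans hsub'' hsub') Finset.sdiff_subset
  · intro x hx y hy hxy
    exact le_of_not_gt (hind' x (hsub'' hx) y (hsub'' hy) hxy)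

/-- The set of achievable rates with pairwise-distinguishable codebooks. -/
def distSet (mY : Set E → ℝ) (ε δ : ℝ) : Set ℝ :=
  {r | ∃ C : Finset E, IsDistinguishable mY ε δ C ∧
    r = Real.logb 2 (C.card : ℝ)}

/-- The set of achievable rates with average-overlap codebooks. -/
def avgSet (mY : Set E → ℝ) (ε δ : ℝ) : Set ℝ :=
  {r | ∃ C : Finset E,
    (1 / (2 * (C.card : ℝ) * minBallUncertainty mY ε)) *
        ∑ x₁ ∈ C, ∑ x₂ ∈ C.erase x₁,
          mY (Metric.closedBall x₁ ε ∩ Metric.closedBall x₂ ε) ≤ δ ∧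
    r = Real.logb 2 (C.card : ℝ)}

lemma pairCapacity_eq_sSup (mY : Set E → ℝ) (ε δ : ℝ) :
    pairCapacity mY ε δ = sSup (distSet mY ε δ) := rfl

lemma avgCapacity_eq_sSup (mY : Set E → ℝ) (ε δ : ℝ) :
    avgCapacity mY ε δ = sSup (avgSet mY ε δ) := rfl

lemma zero_mem_distSet (mY : Set E → ℝ) (ε δ : ℝ) : (0 : ℝ) ∈ distSet mY ε δ :=
  ⟨∅, fun x hx => absurd hx (by simp), by simp⟩

lemma zero_mem_avgSet (mY : Set E → ℝ) (ε δ : ℝ) (hδ : 0 ≤ δ) :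
    (0 : ℝ) ∈ avgSet mY ε δ :=
  ⟨∅, by simpa using hδ, by simp⟩

lemma distSet_nonneg (mY : Set E → ℝ) (ε δ : ℝ) : ∀ r ∈ distSet mY ε δ, 0 ≤ r := by
  rintro r ⟨C, -, rfl⟩
  rcases Nat.eq_zero_or_pos C.card with h | h
  · simp [h]
  · exact Real.logb_nonneg one_lt_two (by exact_mod_cast h)

lemma avgSet_nonneg (mY : Set E → ℝ) (ε δ : ℝ) : ∀ r ∈ avgSet mY ε δ, 0 ≤ r := by
  rintro r ⟨C, -, rfl⟩
  rcases Nat.eq_zero_or_pos C.card with h | h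
  · simp [h]
  · exact Real.logb_nonneg one_lt_two (by exact_mod_cast h)

lemma distSet_subset_avgSet (mY : Set E → ℝ) (hm0 : ∀ S : Set E, 0 ≤ mY S)
    (hYuniv : mY Set.univ = 1) (ε δ : ℝ) (hδ0 : 0 ≤ δ)
    (hV : 0 < minBallUncertainty mY ε) :
    distSet mY ε δ ⊆ avgSet mY ε (δ / (2 * minBallUncertainty mY ε)) := by
  rintro r ⟨C, hC, rfl⟩
  refine ⟨C, ?_, rfl⟩
  set mV := minBallUncertainty mY ε with hmV
  rcases Nat.eq_zero_or_pos C.card with h0 | h0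
  · rw [Finset.card_eq_zero] at h0
    subst h0
    simpa using div_nonneg hδ0 (by positivity)
  · have hM : (0:ℝ) < C.card := by exact_mod_cast h0
    have hbound : ∀ x₁ ∈ C, ∀ x₂ ∈ C.erase x₁,
        mY (Metric.closedBall x₁ ε ∩ Metric.closedBall x₂ ε) ≤ δ / C.card := by
      intro x₁ h₁ x₂ h₂
      have h3 := hC x₁ h₁ x₂ (Finset.mem_of_mem_erase h₂) (Finset.ne_of_mem_erase h₂).symm
      rwa [hYuniv, div_one] at h3
    have hinner : ∀ x₁ ∈ C, ∑ x₂ ∈ C.erase x₁,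
        mY (Metric.closedBall x₁ ε ∩ Metric.closedBall x₂ ε) ≤ δ := by
      intro x₁ h₁
      calc ∑ x₂ ∈ C.erase x₁, mY (Metric.closedBall x₁ ε ∩ Metric.closedBall x₂ ε)
          ≤ ((C.erase x₁).card : ℝ) * (δ / C.card) := by
            simpa [nsmul_eq_mul] using
              Finset.sum_le_card_nsmul (C.erase x₁) _ (δ / C.card) (hbound x₁ h₁)
        _ ≤ (C.card : ℝ) * (δ / C.card) := by
            refine mul_le_mul_of_nonneg_right ?_ (div_nonneg hδ0 hM.le)
            exact_mod_cast Finset.card_le_card (Finset.erase_subset _ _)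
        _ = δ := by field_simp
    have hS : ∑ x₁ ∈ C, ∑ x₂ ∈ C.erase x₁,
        mY (Metric.closedBall x₁ ε ∩ Metric.closedBall x₂ ε) ≤ (C.card : ℝ) * δ := by
      calc _ ≤ ∑ _x₁ ∈ C, δ := Finset.sum_le_sum hinner
        _ = (C.card : ℝ) * δ := by rw [Finset.sum_const, nsmul_eq_mul]
    have hcoef : (0:ℝ) ≤ 1 / (2 * (C.card : ℝ) * mV) := by positivity
    calc (1 / (2 * (C.card : ℝ) * mV)) *
          ∑ x₁ ∈ C, ∑ x₂ ∈ C.erase x₁,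
            mY (Metric.closedBall x₁ ε ∩ Metric.closedBall x₂ ε)
        ≤ (1 / (2 * (C.card : ℝ) * mV)) * ((C.card : ℝ) * δ) :=
          mul_le_mul_of_nonneg_left hS hcoef
      _ = δ / (2 * mV) := by field_simp

lemma not_bddAbove_distSet (mY : Set E → ℝ) (hm0 : ∀ S : Set E, 0 ≤ mY S)
    (hYuniv : mY Set.univ = 1) (ε δ : ℝ) (hδ0 : 0 ≤ δ)
    (hV : 0 < minBallUncertainty mY ε)
    (hB : ¬BddAbove (avgSet mY ε (δ / (2 * minBallUncertainty mY ε)))) :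
    ¬BddAbove (distSet mY ε δ) := by
  classical
  set mV := minBallUncertainty mY ε with hmV
  rw [not_bddAbove_iff] at hB ⊢
  intro b
  set w : E → E → ℝ := fun x y => mY (Metric.closedBall x ε ∩ Metric.closedBall y ε)
    with hwdef
  have hw : ∀ x y, 0 ≤ w x y := fun x y => hm0 _
  have hws : ∀ x y, w x y = w y x := fun x y => congrArg mY (Set.inter_comm _ _)
  rcases eq_or_lt_of_le hδ0 with hδ | hδ
  · -- δ = 0 : every average-overlap codebook is pairwise distinguishable
    obtain ⟨r, ⟨C, hC, rfl⟩, hrb⟩ := hB b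
    refine ⟨Real.logb 2 (C.card : ℝ), ⟨C, ?_, rfl⟩, hrb⟩
    intro x₁ h₁ x₂ h₂ hne
    rw [hYuniv, div_one, ← hδ, zero_div]
    have hMpos : (0:ℝ) < C.card := by
      exact_mod_cast Finset.card_pos.2 ⟨x₁, h₁⟩
    have hcoef : (0:ℝ) < 1 / (2 * (C.card : ℝ) * mV) := by positivity
    rw [← hδ, zero_div] at hC
    have hS0 : ∑ x ∈ C, ∑ y ∈ C.erase x, w x y ≤ 0 := by
      have h4 : (1 / (2 * (C.card : ℝ) * mV)) * ∑ x ∈ C, ∑ y ∈ C.erase x, w x y ≤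
          (1 / (2 * (C.card : ℝ) * mV)) * 0 := by simpa using hC
      exact le_of_mul_le_mul_left h4 hcoef
    have h5 : w x₁ x₂ ≤ ∑ y ∈ C.erase x₁, w x₁ y :=
      Finset.single_le_sum (fun y _ => hw x₁ y) (Finset.mem_erase.2 ⟨hne.symm, h₂⟩)
    have h6 : ∑ y ∈ C.erase x₁, w x₁ y ≤ ∑ x ∈ C, ∑ y ∈ C.erase x, w x y :=
      Finset.single_le_sum (fun x _ => Finset.sum_nonneg fun y _ => hw x y) h₁
    linarith
  · -- δ > 0 : extract a large pairwise-distinguishable sub-codebook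
    set N : ℕ := ⌊(2:ℝ) ^ b⌋₊ + 1 with hNdef
    have hN1 : 1 ≤ N := Nat.le_add_left 1 _
    have hNpos : (0:ℝ) < N := by exact_mod_cast hN1
    have hbN : b < Real.logb 2 (N : ℝ) := by
      have h1 : (2:ℝ) ^ b < (N : ℝ) := by
        have h2 := Nat.lt_floor_add_one ((2:ℝ) ^ b)
        push_cast [hNdef]
        push_cast at h2
        linarith
      calc b = Real.logb 2 ((2:ℝ) ^ b) := (Real.logb_rpow (by norm_num) (by norm_num)).symm
        _ < Real.logb 2 (N : ℝ) :=
          Real.logb_lt_logb one_lt_two (Real.rpow_pos_of_pos two_pos b) h1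
    set K : ℕ := 2 * N * (2 * N + 1) with hKdef
    have hK1 : 1 ≤ K := by
      have := Nat.mul_pos (Nat.mul_pos (by norm_num : 0 < 2) hN1) (by omega : 0 < 2 * N + 1)
      omega
    obtain ⟨r, ⟨C, hC, rfl⟩, hrK⟩ := hB (Real.logb 2 (K : ℝ))
    have hKM : K ≤ C.card := by
      by_contra h
      push_neg at h
      have h2 : Real.logb 2 (C.card : ℝ) ≤ Real.logb 2 (K : ℝ) := by
        rcases Nat.eq_zero_or_pos C.card with h0 | h0
        · simp only [h0, Nat.cast_zero, Real.logb_zero]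
          exact Real.logb_nonneg one_lt_two (by exact_mod_cast hK1)
        · exact Real.logb_le_logb_of_le one_lt_two (by exact_mod_cast h0)
            (by exact_mod_cast h.le)
      linarith
    have hM0 : (0:ℝ) < C.card := by
      have : 0 < C.card := lt_of_lt_of_le hK1 hKM
      exact_mod_cast this
    have hS : ∑ x ∈ C, ∑ y ∈ C.erase x, w x y ≤ (δ / N) * N * C.card := by
      have hc : (0:ℝ) < 2 * (C.card : ℝ) * mV := by positivity
      have h2 : ∑ x ∈ C, ∑ y ∈ C.erase x, w x y ≤
          (2 * (C.card : ℝ) * mV) * (δ / (2 * mV)) := by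
        rw [one_div, inv_mul_le_iff₀ hc] at hC
        exact hC
      have h3 : (2 * (C.card : ℝ) * mV) * (δ / (2 * mV)) = (δ / N) * N * C.card := by
        field_simp
      linarith
    obtain ⟨C', hsub, hcard, hpair⟩ :=
      extract_aux C w hw hws (δ / N) (div_pos hδ hNpos) N hS (by rw [← hKdef]; exact hKM)
    refine ⟨Real.logb 2 (N : ℝ), ⟨C', ?_, by rw [hcard]⟩, hbN⟩
    intro x₁ h₁ x₂ h₂ hne
    rw [hYuniv, div_one, hcard]
    exact hpair x₁ h₁ x₂ h₂ hne

lemma rpow_two_mul_add_one (s : ℝ) :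
    (2:ℝ) ^ (2 * s + 1) = (2:ℝ) ^ s * (2:ℝ) ^ s * 2 := by
  rw [show 2 * s + 1 = s + (s + 1) by ring, Real.rpow_add two_pos,
    Real.rpow_add two_pos, Real.rpow_one]
  ring

lemma avg_code_isDistinguishable (mY : Set E → ℝ) (hm0 : ∀ S : Set E, 0 ≤ mY S)
    (hYuniv : mY Set.univ = 1) (ε δ : ℝ) (hδ0 : 0 ≤ δ)
    (hV : 0 < minBallUncertainty mY ε) (hB : BddAbove (avgSet mY ε δ))
    {C : Finset E}
    (hC : (1 / (2 * (C.card : ℝ) * minBallUncertainty mY ε)) *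
        ∑ x₁ ∈ C, ∑ x₂ ∈ C.erase x₁,
          mY (Metric.closedBall x₁ ε ∩ Metric.closedBall x₂ ε) ≤ δ)
    (hMcard : 0 < C.card) :
    IsDistinguishable mY ε
      (δ * minBallUncertainty mY ε * (2:ℝ) ^ (2 * sSup (avgSet mY ε δ) + 1)) C := by
  classical
  set mV := minBallUncertainty mY ε with hmV
  set s := sSup (avgSet mY ε δ) with hs
  set w : E → E → ℝ := fun x y => mY (Metric.closedBall x ε ∩ Metric.closedBall y ε)
    with hwdef
  have hw : ∀ x y, 0 ≤ w x y := fun x y => hm0 _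
  have hMpos : (0:ℝ) < C.card := by exact_mod_cast hMcard
  have hlogb : Real.logb 2 (C.card : ℝ) ≤ s := le_csSup hB ⟨C, hC, rfl⟩
  have hMle : (C.card : ℝ) ≤ (2:ℝ) ^ s := by
    calc (C.card : ℝ) = (2:ℝ) ^ Real.logb 2 (C.card : ℝ) :=
          (Real.rpow_logb two_pos (by norm_num) hMpos).symm
      _ ≤ (2:ℝ) ^ s := (Real.rpow_le_rpow_left_iff one_lt_two).2 hlogb
  intro x₁ h₁ x₂ h₂ hne
  rw [hYuniv, div_one]
  have hwS : w x₁ x₂ ≤ ∑ x ∈ C, ∑ y ∈ C.erase x, w x y := by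
    have h5 : w x₁ x₂ ≤ ∑ y ∈ C.erase x₁, w x₁ y :=
      Finset.single_le_sum (fun y _ => hw x₁ y) (Finset.mem_erase.2 ⟨hne.symm, h₂⟩)
    have h6 : ∑ y ∈ C.erase x₁, w x₁ y ≤ ∑ x ∈ C, ∑ y ∈ C.erase x, w x y :=
      Finset.single_le_sum (fun x _ => Finset.sum_nonneg fun y _ => hw x y) h₁
    linarith
  have hSδ : ∑ x ∈ C, ∑ y ∈ C.erase x, w x y ≤ 2 * (C.card : ℝ) * mV * δ := by
    have hc : (0:ℝ) < 2 * (C.card : ℝ) * mV := by positivity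
    rw [one_div, inv_mul_le_iff₀ hc] at hC
    exact hC
  have hwle : w x₁ x₂ ≤ 2 * (C.card : ℝ) * mV * δ := le_trans hwS hSδ
  rw [le_div_iff₀ hMpos, rpow_two_mul_add_one]
  have hMM : (C.card : ℝ) * C.card ≤ (2:ℝ) ^ s * (2:ℝ) ^ s :=
    mul_le_mul hMle hMle hMpos.le (by positivity)
  calc w x₁ x₂ * C.card ≤ (2 * (C.card : ℝ) * mV * δ) * C.card :=
        mul_le_mul_of_nonneg_right hwle hMpos.le
    _ = (2 * mV * δ) * ((C.card : ℝ) * C.card) := by ring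
    _ ≤ (2 * mV * δ) * ((2:ℝ) ^ s * (2:ℝ) ^ s) :=
        mul_le_mul_of_nonneg_left hMM (by positivity)
    _ = δ * mV * ((2:ℝ) ^ s * (2:ℝ) ^ s * 2) := by ring

lemma bddAbove_distSet_of_bddAbove_avgSet (mY : Set E → ℝ)
    (hm0 : ∀ S : Set E, 0 ≤ mY S) (hYuniv : mY Set.univ = 1) (ε δ : ℝ)
    (hδ0 : 0 ≤ δ) (hV : 0 < minBallUncertainty mY ε)
    (hB : BddAbove (avgSet mY ε δ)) :
    BddAbove (distSet mY ε
      (δ * minBallUncertainty mY ε * (2:ℝ) ^ (2 * sSup (avgSet mY ε δ) + 1))) := by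
  classical
  set mV := minBallUncertainty mY ε with hmV
  set s := sSup (avgSet mY ε δ) with hs
  set δ'' := δ * mV * (2:ℝ) ^ (2 * s + 1) with hδ''
  have hδ''0 : 0 ≤ δ'' := by
    rw [hδ'']
    positivity
  have hs0 : 0 ≤ s := Real.sSup_nonneg (avgSet_nonneg mY ε δ)
  have h2spos : (0:ℝ) < (2:ℝ) ^ (2 * s) := Real.rpow_pos_of_pos two_pos _
  have h2s1 : (1:ℝ) ≤ (2:ℝ) ^ (2 * s) := by
    calc (1:ℝ) = (2:ℝ) ^ (0:ℝ) := (Real.rpow_zero 2).symm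
      _ ≤ (2:ℝ) ^ (2 * s) :=
        (Real.rpow_le_rpow_left_iff one_lt_two).2 (by linarith)
  have h2s0 : (0:ℝ) < (2:ℝ) ^ s := Real.rpow_pos_of_pos two_pos _
  have harg1 : (1:ℝ) ≤ (2:ℝ) ^ (2 * s) * ((2:ℝ) ^ s + 1) := by nlinarith
  refine ⟨Real.logb 2 ((2:ℝ) ^ (2 * s) * ((2:ℝ) ^ s + 1)), ?_⟩
  rintro r ⟨C, hC, rfl⟩
  rcases Nat.eq_zero_or_pos C.card with h0 | h0
  · simp only [h0, Nat.cast_zero, Real.logb_zero]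
    exact Real.logb_nonneg one_lt_two harg1
  · have hMpos : (0:ℝ) < C.card := by exact_mod_cast h0
    suffices hlt : (C.card : ℝ) < (2:ℝ) ^ (2 * s) * ((2:ℝ) ^ s + 1) by
      exact Real.logb_le_logb_of_le one_lt_two hMpos hlt.le
    set K : ℕ := ⌊(C.card : ℝ) / (2:ℝ) ^ (2 * s)⌋₊ with hKdef
    rcases Nat.eq_zero_or_pos K with hK0 | hKpos
    · have h1 : (C.card : ℝ) / (2:ℝ) ^ (2 * s) < 1 := by
        have := Nat.floor_eq_zero.1 hK0
        exact this
      have h2 : (C.card : ℝ) < (2:ℝ) ^ (2 * s) := by rwa [div_lt_one h2spos] at h1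
      nlinarith
    · have hKfl : (K : ℝ) ≤ (C.card : ℝ) / (2:ℝ) ^ (2 * s) :=
        Nat.floor_le (by positivity)
      have hK2 : (K : ℝ) * (2:ℝ) ^ (2 * s) ≤ C.card := by
        rw [← le_div_iff₀ h2spos]
        exact hKfl
      have hKM : K ≤ C.card := by
        have h2 : (C.card : ℝ) / (2:ℝ) ^ (2 * s) ≤ C.card := by
          rw [div_le_iff₀ h2spos]
          nlinarith
        exact_mod_cast hKfl.trans h2
      obtain ⟨C', hsub, hcard⟩ := Finset.exists_subset_card_eq hKM
      have hKpos' : (0:ℝ) < K := by exact_mod_cast hKpos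
      have hpair : ∀ x₁ ∈ C', ∀ x₂ ∈ C'.erase x₁,
          mY (Metric.closedBall x₁ ε ∩ Metric.closedBall x₂ ε) ≤ δ'' / C.card := by
        intro x₁ h₁ x₂ h₂
        have h3 := hC x₁ (hsub h₁) x₂ (hsub (Finset.mem_of_mem_erase h₂))
          (Finset.ne_of_mem_erase h₂).symm
        rwa [hYuniv, div_one] at h3
      have hinner : ∀ x₁ ∈ C', ∑ x₂ ∈ C'.erase x₁,
          mY (Metric.closedBall x₁ ε ∩ Metric.closedBall x₂ ε) ≤
            (K : ℝ) * (δ'' / C.card) := by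
        intro x₁ h₁
        calc ∑ x₂ ∈ C'.erase x₁, mY (Metric.closedBall x₁ ε ∩ Metric.closedBall x₂ ε)
            ≤ ((C'.erase x₁).card : ℝ) * (δ'' / C.card) := by
              simpa [nsmul_eq_mul] using
                Finset.sum_le_card_nsmul (C'.erase x₁) _ (δ'' / C.card) (hpair x₁ h₁)
          _ ≤ (K : ℝ) * (δ'' / C.card) := by
              refine mul_le_mul_of_nonneg_right ?_ (div_nonneg hδ''0 hMpos.le)
              have h7 : (C'.erase x₁).card ≤ K := hcard ▸ Finset.card_le_card (Finset.erase_subset _ _)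
              exact_mod_cast h7
      have hS' : ∑ x₁ ∈ C', ∑ x₂ ∈ C'.erase x₁,
          mY (Metric.closedBall x₁ ε ∩ Metric.closedBall x₂ ε) ≤
            (K : ℝ) * ((K : ℝ) * (δ'' / C.card)) := by
        calc ∑ x₁ ∈ C', ∑ x₂ ∈ C'.erase x₁,
            mY (Metric.closedBall x₁ ε ∩ Metric.closedBall x₂ ε)
            ≤ ∑ _x₁ ∈ C', (K : ℝ) * (δ'' / C.card) := Finset.sum_le_sum hinner
          _ = (K : ℝ) * ((K : ℝ) * (δ'' / C.card)) := by
              rw [Finset.sum_const, hcard, nsmul_eq_mul]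
      have hconstraint : (1 / (2 * ((C'.card : ℕ) : ℝ) * mV)) *
          ∑ x₁ ∈ C', ∑ x₂ ∈ C'.erase x₁,
            mY (Metric.closedBall x₁ ε ∩ Metric.closedBall x₂ ε) ≤ δ := by
        rw [hcard]
        have hcoef : (0:ℝ) ≤ 1 / (2 * (K : ℝ) * mV) := by positivity
        calc (1 / (2 * (K : ℝ) * mV)) *
            ∑ x₁ ∈ C', ∑ x₂ ∈ C'.erase x₁,
              mY (Metric.closedBall x₁ ε ∩ Metric.closedBall x₂ ε)
            ≤ (1 / (2 * (K : ℝ) * mV)) * ((K : ℝ) * ((K : ℝ) * (δ'' / C.card))) :=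
              mul_le_mul_of_nonneg_left hS' hcoef
          _ = δ * (((K : ℝ) * (2:ℝ) ^ (2 * s)) / C.card) := by
              rw [hδ'', rpow_two_mul_add_one, show (2:ℝ) ^ (2 * s) = (2:ℝ) ^ s * (2:ℝ) ^ s by
                rw [two_mul, Real.rpow_add two_pos]]
              field_simp
          _ ≤ δ * 1 := by
              refine mul_le_mul_of_nonneg_left ?_ hδ0
              rw [div_le_one hMpos]
              exact hK2
          _ = δ := mul_one δ
      have hmem : Real.logb 2 ((C'.card : ℕ) : ℝ) ∈ avgSet mY ε δ := ⟨C', hconstraint, rfl⟩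
      have hlogbK : Real.logb 2 (K : ℝ) ≤ s := by
        have h8 := le_csSup hB hmem
        rwa [hcard] at h8
      have hKle : (K : ℝ) ≤ (2:ℝ) ^ s := by
        calc (K : ℝ) = (2:ℝ) ^ Real.logb 2 (K : ℝ) :=
              (Real.rpow_logb two_pos (by norm_num) hKpos').symm
          _ ≤ (2:ℝ) ^ s := (Real.rpow_le_rpow_left_iff one_lt_two).2 hlogbK
      have h5 : (C.card : ℝ) / (2:ℝ) ^ (2 * s) < (K : ℝ) + 1 :=
        Nat.lt_floor_add_one _
      have h6 : (C.card : ℝ) < ((K : ℝ) + 1) * (2:ℝ) ^ (2 * s) :=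
        (div_lt_iff₀ h2spos).1 h5
      nlinarith

/-- Theorem 4: relation between the pairwise-overlap capacity
`C_ε^δ` and the average-overlap capacity `C̃_ε^δ`:
`C_ε^δ ≤ C̃_ε^{δ/(2 m(V_ε))}` and `C̃_ε^δ ≤ C_ε^{δ m(V_ε) 2^{2 C̃_ε^δ + 1}}`. -/
theorem capacity_comparison
    (mY : Set E → ℝ) (hmY : IsUncertaintyFn mY) (hYuniv : mY Set.univ = 1)
    (ε δ : ℝ) (hε0 : 0 < ε) (hε1 : ε ≤ 1) (hδ0 : 0 ≤ δ)
    (hδV : δ < minBallUncertainty mY ε) :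
    pairCapacity mY ε δ ≤
      avgCapacity mY ε (δ / (2 * minBallUncertainty mY ε)) ∧
    avgCapacity mY ε δ ≤
      pairCapacity mY ε
        (δ * minBallUncertainty mY ε *
          (2 : ℝ) ^ (2 * avgCapacity mY ε δ + 1)) := by
  have hm0 : ∀ S : Set E, 0 ≤ mY S := by
    intro S
    rcases S.eq_empty_or_nonempty with rfl | h
    · exact le_of_eq hmY.1.symm
    · exact (hmY.2.1 S h).le
  have hV : 0 < minBallUncertainty mY ε := lt_of_le_of_lt hδ0 hδV
  constructor
  · rw [pairCapacity_eq_sSup, avgCapacity_eq_sSup]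
    by_cases hB : BddAbove (avgSet mY ε (δ / (2 * minBallUncertainty mY ε)))
    · exact csSup_le_csSup hB ⟨0, zero_mem_distSet mY ε δ⟩
        (distSet_subset_avgSet mY hm0 hYuniv ε δ hδ0 hV)
    · rw [Real.sSup_of_not_bddAbove hB,
        Real.sSup_of_not_bddAbove (not_bddAbove_distSet mY hm0 hYuniv ε δ hδ0 hV hB)]
  · rw [avgCapacity_eq_sSup, pairCapacity_eq_sSup]
    by_cases hB : BddAbove (avgSet mY ε δ)
    · refine Real.sSup_le ?_ (Real.sSup_nonneg (distSet_nonneg mY ε _))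
      rintro r ⟨C, hC, rfl⟩
      rcases Nat.eq_zero_or_pos C.card with h0 | h0
      · simp only [h0, Nat.cast_zero, Real.logb_zero]
        exact Real.sSup_nonneg (distSet_nonneg mY ε _)
      · exact le_csSup (bddAbove_distSet_of_bddAbove_avgSet mY hm0 hYuniv ε δ hδ0 hV hB)
          ⟨C, avg_code_isDistinguishable mY hm0 hYuniv ε δ hδ0 hV hB hC h0, rfl⟩
    · rw [Real.sSup_of_not_bddAbove hB]
      exact Real.sSup_nonneg (distSet_nonneg mY ε _)

end NSIT
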